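/- arXiv:2210.12001 — 2 statements merged into one kernel-verified Lean document; each statement's English description precedes it below -/
import Mathlib

section
/- Let w⁰ satisfy w⁰_{j+m/2} = w⁰_j for j = 1, …, m/2, let σ be L-Lipschitz, assume ‖x_i‖₂ ≤ 1 and |y_i| ≤ C_y for all i, m ≥ 4, ζ > 0, and let w* satisfy ‖w* − w⁰‖_F ≤ ε. If f* := f(w*; v*) satisfies ⟨f*, y⟩ ≥ 0 and ‖f*‖₂ ≤ ‖f(w*; ζ·𝟙)‖₂ (properties the paper derives at a KKT point of the constrained problem), then ‖f* − y‖₂² ≤ n ((m/2) L ζ ε)² + n C_y². -/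
noncomputable section

/-- Euclidean (ℓ²) norm of a finite-dimensional real vector. -/
def eNorm {ι : Type*} [Fintype ι] (r : ι → ℝ) : ℝ :=
  Real.sqrt (∑ i, r i ^ 2)

/-- Frobenius norm of a hidden-weight configuration, neurons indexed by `Fin h ⊕ Fin h`
(first half / mirrored half, so the width is `m = 2h`). -/
def wFrob {d h : ℕ} (u : (Fin h ⊕ Fin h) → Fin d → ℝ) : ℝ :=
  Real.sqrt (∑ j, ∑ k, u j k ^ 2)

/-- Pairwise one-hidden-layer network
`f(x; w, v) = ∑_{j=1}^{m/2} vⱼ (σ(wⱼᵀ x) − σ(w_{j+m/2}ᵀ x))` with `m = 2h`. -/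
def pairNet (σ : ℝ → ℝ) {d h : ℕ} (x : Fin d → ℝ)
    (w : (Fin h ⊕ Fin h) → Fin d → ℝ) (v : Fin h → ℝ) : ℝ :=
  ∑ j : Fin h, v j * (σ (∑ k, w (Sum.inl j) k * x k) - σ (∑ k, w (Sum.inr j) k * x k))

/-- Vector of network outputs `f(w; v) = (f(x₁; w, v), …, f(xₙ; w, v)) ∈ ℝⁿ`. -/
def pairVec (σ : ℝ → ℝ) {d n h : ℕ} (x : Fin n → Fin d → ℝ)
    (w : (Fin h ⊕ Fin h) → Fin d → ℝ) (v : Fin h → ℝ) : Fin n → ℝ :=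
  fun i => pairNet σ (x i) w v

/-- Empirical loss `ℓ(w, v) = (1/2) ‖y − f(w; v)‖₂²`. -/
def pairLoss (σ : ℝ → ℝ) {d n h : ℕ} (x : Fin n → Fin d → ℝ) (y : Fin n → ℝ)
    (w : (Fin h ⊕ Fin h) → Fin d → ℝ) (v : Fin h → ℝ) : ℝ :=
  (1 / 2) * ∑ i, (y i - pairNet σ (x i) w v) ^ 2

/-- Gradient of the empirical loss with respect to the hidden weights, as a
hidden-weight-shaped array of partial derivatives. -/
def gradLossW (σ : ℝ → ℝ) {d n h : ℕ} (x : Fin n → Fin d → ℝ) (y : Fin n → ℝ)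
    (w : (Fin h ⊕ Fin h) → Fin d → ℝ) (v : Fin h → ℝ) :
    (Fin h ⊕ Fin h) → Fin d → ℝ :=
  fun j k => fderiv ℝ (fun w' => pairLoss σ x y w' v) w (Pi.single j (Pi.single k 1))

/-- Feasible set `B_{ζ,κ}` for the outer weights: every entry is at least `ζ` and the ratio
of any two entries is at most `κ`. -/
def inB {h : ℕ} (ζ κ : ℝ) (v : Fin h → ℝ) : Prop :=
  (∀ j, ζ ≤ v j) ∧ ∀ j j', v j / v j' ≤ κ

/-- `J̃(w)ᵀ r`, where `J̃(w) ∈ ℝ^{n × md}` is the `v`-stripped Jacobian whose `(i, j)` block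
is `σ'(wⱼᵀ xᵢ) xᵢᵀ`. -/
def strippedJacT (σ : ℝ → ℝ) {d n h : ℕ} (x : Fin n → Fin d → ℝ)
    (w : (Fin h ⊕ Fin h) → Fin d → ℝ) (r : Fin n → ℝ) :
    (Fin h ⊕ Fin h) → Fin d → ℝ :=
  fun j k => ∑ i, deriv σ (∑ s, w j s * x i s) * x i k * r i

/-- Smallest singular value of the `v`-stripped Jacobian `J̃(w) ∈ ℝ^{n × md}`:
the infimum of `‖J̃(w)ᵀ r‖₂` over unit vectors `r ∈ ℝⁿ`. -/
def sMin (σ : ℝ → ℝ) {d n h : ℕ} (x : Fin n → Fin d → ℝ)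
    (w : (Fin h ⊕ Fin h) → Fin d → ℝ) : ℝ :=
  sInf ((fun r : Fin n → ℝ => wFrob (strippedJacT σ x w r)) '' {r | eNorm r = 1})

/-!
Since `w⁰` is mirrored, `w*ⱼ − w*ⱼ₊ₕ = (w* − w⁰)ⱼ − (w* − w⁰)ⱼ₊ₕ`, so the `h` pair differences have
total length at most `√(2h) ‖w* − w⁰‖_F ≤ h ε`. As `σ` is `L`-Lipschitz and `‖xᵢ‖ ≤ 1`, each
output of `f(w*; ζ·𝟙)` is then at most `h L ζ ε` in absolute value. Finally
`‖f* − y‖² = ‖f*‖² − 2⟨f*, y⟩ + ‖y‖² ≤ ‖f(w*; ζ·𝟙)‖² + ‖y‖²`, and both terms are bounded entrywise.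
-/

open Finset

section EuclideanNorm

variable {ι : Type*} [Fintype ι]

lemma eNorm_eq_norm (r : ι → ℝ) : eNorm r = ‖(WithLp.toLp 2 r : EuclideanSpace ℝ ι)‖ := by
  simp [eNorm, EuclideanSpace.norm_eq]

lemma eNorm_nonneg (r : ι → ℝ) : 0 ≤ eNorm r := Real.sqrt_nonneg _

lemma eNorm_sq (r : ι → ℝ) : eNorm r ^ 2 = ∑ i, r i ^ 2 :=
  Real.sq_sqrt (sum_nonneg fun _ _ => sq_nonneg _)

lemma eNorm_sub_le (u v : ι → ℝ) : eNorm (u - v) ≤ eNorm u + eNorm v := by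
  simpa [eNorm_eq_norm] using
    norm_sub_le (WithLp.toLp 2 u : EuclideanSpace ℝ ι) (WithLp.toLp 2 v)

lemma abs_sum_mul_le_eNorm_mul (u v : ι → ℝ) : |∑ k, u k * v k| ≤ eNorm u * eNorm v := by
  simpa [eNorm_eq_norm, PiLp.inner_apply, mul_comm] using
    abs_real_inner_le_norm (WithLp.toLp 2 u : EuclideanSpace ℝ ι) (WithLp.toLp 2 v)

lemma sum_le_sqrt_card_mul_eNorm (r : ι → ℝ) : ∑ i, r i ≤ √(Fintype.card ι) * eNorm r := by
  simpa [eNorm] using Real.sum_mul_le_sqrt_mul_sqrt univ (fun _ => 1) r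

lemma eNorm_sq_le_card_mul_sq {r : ι → ℝ} {c : ℝ} (hr : ∀ i, |r i| ≤ c) :
    eNorm r ^ 2 ≤ Fintype.card ι * c ^ 2 := by
  rw [eNorm_sq]
  calc ∑ i, r i ^ 2 ≤ ∑ _i : ι, c ^ 2 :=
        sum_le_sum fun i _ => sq_le_sq' (abs_le.1 (hr i)).1 (abs_le.1 (hr i)).2
    _ = Fintype.card ι * c ^ 2 := by simp

lemma eNorm_sub_sq_le_of_sum_mul_nonneg {a b y : ι → ℝ} (hay : 0 ≤ ∑ i, a i * y i)
    (hab : eNorm a ≤ eNorm b) :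
    eNorm (fun i => a i - y i) ^ 2 ≤ eNorm b ^ 2 + eNorm y ^ 2 := by
  have hexpand :
      eNorm (fun i => a i - y i) ^ 2 = eNorm a ^ 2 - 2 * ∑ i, a i * y i + eNorm y ^ 2 := by
    simp only [eNorm_sq, mul_sum, ← sum_sub_distrib, ← sum_add_distrib]
    exact sum_congr rfl fun i _ => by ring
  have := pow_le_pow_left₀ (eNorm_nonneg a) hab 2
  linarith

end EuclideanNorm

lemma LipschitzWith.abs_sub_comp_sum_mul_le {ι : Type*} [Fintype ι] {σ : ℝ → ℝ} {L : NNReal}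
    (hσ : LipschitzWith L σ) (u v x : ι → ℝ) (hx : eNorm x ≤ 1) :
    |σ (∑ k, u k * x k) - σ (∑ k, v k * x k)| ≤ L * eNorm (u - v) := by
  have hdot : ∑ k, u k * x k - ∑ k, v k * x k = ∑ k, (u - v) k * x k := by
    simp only [Pi.sub_apply, sub_mul, sum_sub_distrib]
  calc |σ (∑ k, u k * x k) - σ (∑ k, v k * x k)|
      ≤ L * |∑ k, u k * x k - ∑ k, v k * x k| := by
        simpa only [Real.dist_eq] using hσ.dist_le_mul _ _
    _ ≤ L * eNorm (u - v) := by
        rw [hdot]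
        gcongr
        calc _ ≤ eNorm (u - v) * eNorm x := abs_sum_mul_le_eNorm_mul _ _
          _ ≤ eNorm (u - v) := mul_le_of_le_one_right (eNorm_nonneg _) hx

section PairNetwork

variable {d h : ℕ}

lemma wFrob_eq_eNorm (u : (Fin h ⊕ Fin h) → Fin d → ℝ) :
    wFrob u = eNorm fun j => eNorm (u j) := by
  simp [wFrob, eNorm, Real.sq_sqrt, sum_nonneg, sq_nonneg]

lemma abs_pairNet_const_le {σ : ℝ → ℝ} {L : NNReal} (hσ : LipschitzWith L σ) {ζ : ℝ}
    (hζ : 0 ≤ ζ) {x : Fin d → ℝ} (hx : eNorm x ≤ 1) (w : (Fin h ⊕ Fin h) → Fin d → ℝ) :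
    |pairNet σ x w (fun _ => ζ)| ≤ ζ * L * ∑ j, eNorm (w (Sum.inl j) - w (Sum.inr j)) := by
  rw [pairNet, mul_assoc, mul_sum, mul_sum]
  refine (abs_sum_le_sum_abs _ _).trans (sum_le_sum fun j _ => ?_)
  rw [abs_mul, abs_of_nonneg hζ]
  exact mul_le_mul_of_nonneg_left (hσ.abs_sub_comp_sum_mul_le _ _ _ hx) hζ

lemma sum_eNorm_sub_le_of_mirror {w w0 : (Fin h ⊕ Fin h) → Fin d → ℝ}
    (hmirror : ∀ j, w0 (Sum.inr j) = w0 (Sum.inl j)) :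
    ∑ j, eNorm (w (Sum.inl j) - w (Sum.inr j)) ≤ √(2 * h) * wFrob (w - w0) := by
  have hpair : ∀ j,
      w (Sum.inl j) - w (Sum.inr j) = (w - w0) (Sum.inl j) - (w - w0) (Sum.inr j) := by
    intro j
    simp only [Pi.sub_apply, hmirror]
    abel
  calc ∑ j, eNorm (w (Sum.inl j) - w (Sum.inr j))
      ≤ ∑ j, (eNorm ((w - w0) (Sum.inl j)) + eNorm ((w - w0) (Sum.inr j))) :=
        sum_le_sum fun j _ => hpair j ▸ eNorm_sub_le _ _
    _ = ∑ J, eNorm ((w - w0) J) := by rw [Fintype.sum_sum_type, sum_add_distrib]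
    _ ≤ √(2 * h) * wFrob (w - w0) := by
        rw [wFrob_eq_eNorm]
        simpa [two_mul] using sum_le_sqrt_card_mul_eNorm fun J => eNorm ((w - w0) J)

end PairNetwork

lemma sqrt_two_mul_le_self {h : ℕ} (hh : 2 ≤ h) : √(2 * h) ≤ h := by
  have : (2 : ℝ) ≤ h := by exact_mod_cast hh
  rw [Real.sqrt_le_left (by positivity)]
  nlinarith

/-- with mirrored `w⁰`, `L`-Lipschitz `σ`, `‖xᵢ‖₂ ≤ 1`, `|yᵢ| ≤ C_y`,
width `m = 2h ≥ 4`, `ζ > 0` and `‖w* − w⁰‖_F ≤ ε`: if `f* := f(w*; v*)` satisfies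
`⟨f*, y⟩ ≥ 0` and `‖f*‖₂ ≤ ‖f(w*; ζ·𝟙)‖₂`, then
`‖f* − y‖₂² ≤ n ((m/2) L ζ ε)² + n C_y²`. -/
theorem statement_10
    (d n h : ℕ) (hh : 2 ≤ h)
    (σ : ℝ → ℝ) (L : NNReal) (hσ_lip : LipschitzWith L σ)
    (x : Fin n → Fin d → ℝ) (y : Fin n → ℝ) (C_y : ℝ)
    (hx : ∀ i, eNorm (x i) ≤ 1) (hy : ∀ i, |y i| ≤ C_y)
    (w0 : (Fin h ⊕ Fin h) → Fin d → ℝ)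
    (hmirror : ∀ j, w0 (Sum.inr j) = w0 (Sum.inl j))
    (ζ ε : ℝ) (hζ : 0 < ζ)
    (wstar : (Fin h ⊕ Fin h) → Fin d → ℝ) (vstar : Fin h → ℝ)
    (hw : wFrob (wstar - w0) ≤ ε)
    (hip : 0 ≤ ∑ i, pairNet σ (x i) wstar vstar * y i)
    (hle : eNorm (fun i => pairNet σ (x i) wstar vstar) ≤
      eNorm (fun i => pairNet σ (x i) wstar (fun _ => ζ))) :
    eNorm (fun i => pairNet σ (x i) wstar vstar - y i) ^ 2 ≤
      (n : ℝ) * ((h : ℝ) * (L : ℝ) * ζ * ε) ^ 2 + (n : ℝ) * C_y ^ 2 := by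
  have hpairs : ∑ j, eNorm (wstar (Sum.inl j) - wstar (Sum.inr j)) ≤ h * ε :=
    calc _ ≤ √(2 * h) * wFrob (wstar - w0) := sum_eNorm_sub_le_of_mirror hmirror
      _ ≤ h * ε :=
          mul_le_mul (sqrt_two_mul_le_self hh) hw (Real.sqrt_nonneg _) (by positivity)
  have hζnet : ∀ i, |pairNet σ (x i) wstar (fun _ => ζ)| ≤ h * L * ζ * ε := fun i =>
    calc _ ≤ ζ * L * ∑ j, eNorm (wstar (Sum.inl j) - wstar (Sum.inr j)) :=
          abs_pairNet_const_le hσ_lip hζ.le (hx i) wstar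
      _ ≤ ζ * L * (h * ε) := by gcongr
      _ = h * L * ζ * ε := by ring
  calc _ ≤ eNorm (fun i => pairNet σ (x i) wstar (fun _ => ζ)) ^ 2 + eNorm y ^ 2 :=
        eNorm_sub_sq_le_of_sum_mul_nonneg hip hle
    _ ≤ _ := by
        gcongr
        · simpa using eNorm_sq_le_card_mul_sq hζnet
        · simpa using eNorm_sq_le_card_mul_sq hy
end
end

section
/- Assume ‖x_i‖₂ ≤ 1 and |y_i| ≤ C_y for all i and m ≥ 4. Then every KKT point (w*, v*) of the constrained problem satisfies ‖∇_w ℓ(w*, v*)‖₂ ≤ (ε/2) · λ √(20 n) · (√n C_y + 3 (n ((m/2) L ζ ε)² + n C_y²)^{1/2}), where λ := max_{1≤i≤n} sup_{t∈[0,2]} ‖∇²_w f(x_i; w⁰ + t(w* − w⁰), v*)‖₂ is the largest spectral norm of the Hessians (with respect to w) of the network outputs along the segment from w⁰ through w*. -/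
noncomputable section

lemma eNorm_nonneg_s12 {ι : Type*} [Fintype ι] (f : ι → ℝ) : 0 ≤ eNorm f := Real.sqrt_nonneg _

lemma cs_abs {ι : Type*} [Fintype ι] (f g : ι → ℝ) : |∑ i, f i * g i| ≤ eNorm f * eNorm g := by
  rw [← Real.sqrt_sq_eq_abs, eNorm, eNorm, ← Real.sqrt_mul (by positivity)]
  exact Real.sqrt_le_sqrt (Finset.sum_mul_sq_le_sq_mul_sq _ _ _)

lemma cs_le {ι : Type*} [Fintype ι] (f g : ι → ℝ) : ∑ i, f i * g i ≤ eNorm f * eNorm g :=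
  le_trans (le_abs_self _) (cs_abs f g)

lemma rolle2 (g g' g'' : ℝ → ℝ) (hg : ∀ t, HasDerivAt g (g' t) t)
    (hg' : ∀ t, HasDerivAt g' (g'' t) t) (M : ℝ)
    (hM : ∀ t ∈ Set.Ioo (0:ℝ) 1, |g'' t| ≤ M) :
    |g 0 - g 1 + g' 1| ≤ M / 2 := by
  set A := g 0 - g 1 + g' 1 with hA
  set φ : ℝ → ℝ := fun t => g t - g 1 - g' 1 * (t - 1) - A * (t - 1) ^ 2 with hφ
  have hφd : ∀ t, HasDerivAt φ (g' t - g' 1 - A * (2 * (t - 1))) t := by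
    intro t
    have h1 : HasDerivAt (fun t : ℝ => t - 1) 1 t := (hasDerivAt_id t).sub_const 1
    have h2 : HasDerivAt (fun t : ℝ => g' 1 * (t - 1)) (g' 1 * 1) t := h1.const_mul (g' 1)
    have h3 : HasDerivAt (fun t : ℝ => (t - 1) ^ 2) (((2:ℕ) : ℝ) * (t - 1) ^ (2 - 1) * 1) t :=
      h1.pow 2
    have h4 : HasDerivAt (fun t : ℝ => A * (t - 1) ^ 2) (A * (((2:ℕ):ℝ) * (t-1)^(2-1) * 1)) t :=
      h3.const_mul A
    have H := (((hg t).sub_const (g 1)).sub h2).sub h4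
    refine H.congr_deriv ?_
    push_cast
    ring
  have hφ0 : φ 0 = 0 := by simp only [hφ, hA]; ring
  have hφ1 : φ 1 = 0 := by simp only [hφ]; ring
  obtain ⟨η, hη, hφ'η⟩ := exists_hasDerivAt_eq_zero (by norm_num : (0:ℝ) < 1)
    (fun t _ => (hφd t).continuousAt.continuousWithinAt) (hφ0.trans hφ1.symm)
    (fun t _ => hφd t)
  set ψ : ℝ → ℝ := fun t => g' t - g' 1 - A * (2 * (t - 1)) with hψ
  have hψd : ∀ t, HasDerivAt ψ (g'' t - A * 2) t := by
    intro t
    have h1 : HasDerivAt (fun t : ℝ => 2 * (t - 1)) (2 * 1) t :=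
      ((hasDerivAt_id t).sub_const 1).const_mul 2
    have h2 : HasDerivAt (fun t : ℝ => A * (2 * (t - 1))) (A * (2 * 1)) t := h1.const_mul A
    have H := ((hg' t).sub_const (g' 1)).sub h2
    refine H.congr_deriv ?_
    ring
  have hψ1 : ψ 1 = 0 := by simp [hψ]
  obtain ⟨ξ, hξ, hψ'ξ⟩ := exists_hasDerivAt_eq_zero hη.2
    (fun t _ => (hψd t).continuousAt.continuousWithinAt) (hφ'η.trans hψ1.symm)
    (fun t _ => hψd t)
  have hξ01 : ξ ∈ Set.Ioo (0:ℝ) 1 := ⟨lt_trans hη.1 hξ.1, hξ.2⟩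
  have h2A : g'' ξ = A * 2 := by linarith
  have := hM ξ hξ01
  rw [h2A, abs_mul] at this
  simp only [abs_two] at this
  have := abs_nonneg A
  linarith [le_abs_self A, neg_abs_le A]

lemma pairNet_contDiff (σ : ℝ → ℝ) (hσ : ∀ z : ℝ, AnalyticAt ℝ σ z) {d h : ℕ}
    (x : Fin d → ℝ) (v : Fin h → ℝ) :
    ContDiff ℝ 2 (fun w : (Fin h ⊕ Fin h) → Fin d → ℝ => pairNet σ x w v) := by
  have hσ2 : ContDiff ℝ 2 σ := contDiff_iff_contDiffAt.mpr fun z => (hσ z).contDiffAt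
  have hlin : ∀ j : Fin h ⊕ Fin h,
      ContDiff ℝ 2 (fun w : (Fin h ⊕ Fin h) → Fin d → ℝ => ∑ k, w j k * x k) := by
    intro j
    apply ContDiff.sum
    intro k _
    have hcoord : ContDiff ℝ 2 (fun w : (Fin h ⊕ Fin h) → Fin d → ℝ => w j k) :=
      ((ContinuousLinearMap.proj k).comp
        (ContinuousLinearMap.proj (R := ℝ) (φ := fun _ : Fin h ⊕ Fin h => Fin d → ℝ) j) :
        ((Fin h ⊕ Fin h) → Fin d → ℝ) →L[ℝ] ℝ).contDiff
    exact hcoord.mul contDiff_const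
  unfold pairNet
  apply ContDiff.sum
  intro j _
  exact contDiff_const.mul ((hσ2.comp (hlin (Sum.inl j))).sub (hσ2.comp (hlin (Sum.inr j))))

lemma clm_decomp {d h : ℕ} (T : ((Fin h ⊕ Fin h) → Fin d → ℝ) →L[ℝ] ℝ)
    (u : (Fin h ⊕ Fin h) → Fin d → ℝ) :
    T u = ∑ j, ∑ k, u j k * T (Pi.single j (Pi.single k 1)) := by
  classical
  have hu : u = ∑ j : Fin h ⊕ Fin h, ∑ k : Fin d, u j k • (Pi.single j (Pi.single k (1:ℝ)) : (Fin h ⊕ Fin h) → Fin d → ℝ) := by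
    funext a b
    simp [Finset.sum_apply, Pi.single_apply, apply_ite (fun f : Fin d → ℝ => f b), mul_ite,
      Finset.sum_ite_eq, Finset.sum_ite_eq']
  conv_lhs => rw [hu]
  rw [map_sum]
  refine Finset.sum_congr rfl fun j _ => ?_
  rw [map_sum]
  exact Finset.sum_congr rfl fun k _ => by rw [map_smul]; rfl

lemma loss_fderiv (σ : ℝ → ℝ) (hσ : ∀ z : ℝ, AnalyticAt ℝ σ z) {d n h : ℕ}
    (x : Fin n → Fin d → ℝ) (y : Fin n → ℝ) (v : Fin h → ℝ)
    (w : (Fin h ⊕ Fin h) → Fin d → ℝ) (e : (Fin h ⊕ Fin h) → Fin d → ℝ) :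
    fderiv ℝ (fun w' => pairLoss σ x y w' v) w e
      = -∑ i, (y i - pairNet σ (x i) w v) *
          (fderiv ℝ (fun w' => pairNet σ (x i) w' v) w e) := by
  have hFd : ∀ i, HasFDerivAt (fun w' => pairNet σ (x i) w' v)
      (fderiv ℝ (fun w' => pairNet σ (x i) w' v) w) w := fun i =>
    (((pairNet_contDiff σ hσ (x i) v).differentiable (by norm_num)) w).hasFDerivAt
  have ha : ∀ i, HasFDerivAt (fun w' => y i - pairNet σ (x i) w' v)
      (-(fderiv ℝ (fun w' => pairNet σ (x i) w' v) w)) w := fun i => (hFd i).const_sub (y i)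
  have hsq : ∀ i, HasFDerivAt (fun w' => (y i - pairNet σ (x i) w' v) ^ 2)
      ((y i - pairNet σ (x i) w v) • (-(fderiv ℝ (fun w' => pairNet σ (x i) w' v) w)) +
       (y i - pairNet σ (x i) w v) • (-(fderiv ℝ (fun w' => pairNet σ (x i) w' v) w))) w := by
    intro i
    have := (ha i).fun_mul (ha i)
    simpa only [← pow_two] using this
  have hsum := HasFDerivAt.fun_sum (fun i (_ : i ∈ Finset.univ) => hsq i)
  have hloss := hsum.const_mul (1/2 : ℝ)
  have : fderiv ℝ (fun w' => pairLoss σ x y w' v) w =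
      (1/2 : ℝ) • ∑ i, ((y i - pairNet σ (x i) w v) • (-(fderiv ℝ (fun w' => pairNet σ (x i) w' v) w)) +
       (y i - pairNet σ (x i) w v) • (-(fderiv ℝ (fun w' => pairNet σ (x i) w' v) w))) := by
    exact HasFDerivAt.fderiv hloss
  rw [this]
  simp only [ContinuousLinearMap.coe_smul', Pi.smul_apply, ContinuousLinearMap.coe_sum',
    Finset.sum_apply, ContinuousLinearMap.add_apply, ContinuousLinearMap.smul_apply,
    ContinuousLinearMap.neg_apply, smul_eq_mul]
  rw [← Finset.sum_neg_distrib, Finset.mul_sum]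
  exact Finset.sum_congr rfl fun i _ => by ring


set_option maxHeartbeats 1600000 in
/-- every KKT point `(w*, v*)` of the constrained problem satisfies
`‖∇_w ℓ(w*, v*)‖₂ ≤ (ε/2) λ √(20 n) (√n C_y + 3 (n ((m/2) L ζ ε)² + n C_y²)^{1/2})`,
where `λ` bounds the spectral norms of the Hessians (with respect to `w`) of the network
outputs along the segment `w⁰ + t (w* − w⁰)`, `t ∈ [0, 2]` (expressed through their
quadratic forms). -/
theorem statement_12
    (d n h : ℕ) (hh : 2 ≤ h)
    (σ : ℝ → ℝ) (L : NNReal)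
    (hσ_an : ∀ z : ℝ, AnalyticAt ℝ σ z) (hσ_lip : LipschitzWith L σ)
    (x : Fin n → Fin d → ℝ) (y : Fin n → ℝ) (C_y : ℝ)
    (hx : ∀ i, eNorm (x i) ≤ 1) (hy : ∀ i, |y i| ≤ C_y)
    (w0 : (Fin h ⊕ Fin h) → Fin d → ℝ)
    (hmirror : ∀ j, w0 (Sum.inr j) = w0 (Sum.inl j))
    (ε ζ κ : ℝ) (hζ : 0 < ζ)
    (wstar : (Fin h ⊕ Fin h) → Fin d → ℝ) (vstar : Fin h → ℝ)
    (hfeas_w : wFrob (wstar - w0) ≤ ε)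
    (hfeas_v : inB ζ κ vstar)
    (hmin_v : ∀ v, inB ζ κ v → pairLoss σ x y wstar vstar ≤ pairLoss σ x y wstar v)
    (hkkt : ∃ c : ℝ, 0 ≤ c ∧
      (∀ j k, -(gradLossW σ x y wstar vstar j k) = c * (wstar j k - w0 j k)) ∧
      (wFrob (wstar - w0) ≠ ε → c = 0))
    (lam : ℝ) (hlam0 : 0 ≤ lam)
    (hlam : ∀ i, ∀ t ∈ Set.Icc (0 : ℝ) 2, ∀ u : (Fin h ⊕ Fin h) → Fin d → ℝ,
      |iteratedFDeriv ℝ 2 (fun w => pairNet σ (x i) w vstar)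
          (w0 + t • (wstar - w0)) (fun _ => u)| ≤ lam * wFrob u ^ 2) :
    wFrob (gradLossW σ x y wstar vstar) ≤
      (ε / 2) * lam * Real.sqrt (20 * (n : ℝ)) *
        (Real.sqrt (n : ℝ) * C_y +
          3 * Real.sqrt ((n : ℝ) * ((h : ℝ) * (L : ℝ) * ζ * ε) ^ 2 + (n : ℝ) * C_y ^ 2)) := by
  classical
  have hε0 : 0 ≤ ε := le_trans (Real.sqrt_nonneg _) hfeas_w
  have hL0 : (0:ℝ) ≤ (L:ℝ) := L.coe_nonneg
  obtain ⟨c, hc0, hge, hcz⟩ := hkkt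
  have hRHS : 0 ≤ (ε / 2) * lam * Real.sqrt (20 * (n : ℝ)) *
      (Real.sqrt (n : ℝ) * C_y +
        3 * Real.sqrt ((n : ℝ) * ((h : ℝ) * (L : ℝ) * ζ * ε) ^ 2 + (n : ℝ) * C_y ^ 2)) := by
    rcases Nat.eq_zero_or_pos n with hn | hn
    · subst hn; simp
    · have hCy : 0 ≤ C_y := le_trans (abs_nonneg _) (hy ⟨0, hn⟩)
      have h1 : 0 ≤ Real.sqrt (n : ℝ) * C_y := mul_nonneg (Real.sqrt_nonneg _) hCy
      have h2 : 0 ≤ (3:ℝ) * Real.sqrt ((n : ℝ) * ((h : ℝ) * (L : ℝ) * ζ * ε) ^ 2 + (n : ℝ) * C_y ^ 2) := by positivity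
      have h3 : 0 ≤ (ε / 2) * lam * Real.sqrt (20 * (n : ℝ)) := by positivity
      exact mul_nonneg h3 (by linarith)
  have hgeq : ∀ j k, gradLossW σ x y wstar vstar j k = -(c * (wstar j k - w0 j k)) := by
    intro j k; have := hge j k; linarith
  have hLHS : wFrob (gradLossW σ x y wstar vstar) = c * wFrob (wstar - w0) := by
    unfold wFrob
    have hsq : ∑ j, ∑ k, (gradLossW σ x y wstar vstar j k)^2
        = c^2 * ∑ j, ∑ k, ((wstar - w0) j k)^2 := by
      rw [Finset.mul_sum]
      refine Finset.sum_congr rfl fun j _ => ?_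
      rw [Finset.mul_sum]
      refine Finset.sum_congr rfl fun k _ => ?_
      rw [hgeq j k]
      simp only [Pi.sub_apply]
      ring
    rw [hsq, Real.sqrt_mul (sq_nonneg c), Real.sqrt_sq hc0]
  by_cases hcase : wFrob (wstar - w0) = ε
  swap
  · rw [hLHS, hcz hcase, zero_mul]; exact hRHS
  rcases eq_or_lt_of_le hε0 with hε | hε
  · rw [hLHS, hcase, ← hε, mul_zero]
    rw [← hε] at hRHS
    exact hRHS
  -- main case : 0 < ε and wFrob (wstar - w0) = ε
  set u : (Fin h ⊕ Fin h) → Fin d → ℝ := wstar - w0 with hu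
  have hSnn : 0 ≤ ∑ j, ∑ k, u j k ^ 2 := by positivity
  have hS : ∑ j, ∑ k, u j k ^ 2 = ε ^ 2 := by
    have h1 : Real.sqrt (∑ j, ∑ k, u j k ^ 2) = ε := hcase
    rw [← h1, Real.sq_sqrt hSnn]
  have hFdiff : ∀ (i : Fin n) (w : (Fin h ⊕ Fin h) → Fin d → ℝ),
      DifferentiableAt ℝ (fun w' => pairNet σ (x i) w' vstar) w := fun i w =>
    ((pairNet_contDiff σ hσ_an (x i) vstar).differentiable (by norm_num)) w
  have hline : ∀ t : ℝ, HasDerivAt (fun s : ℝ => w0 + s • u) u t := fun t => by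
    simpa using ((hasDerivAt_id t).smul_const u).const_add w0
  have hgd : ∀ (i : Fin n) (t : ℝ), HasDerivAt (fun s : ℝ => pairNet σ (x i) (w0 + s • u) vstar)
      (fderiv ℝ (fun w' => pairNet σ (x i) w' vstar) (w0 + t • u) u) t := fun i t =>
    ((hFdiff i _).hasFDerivAt).comp_hasDerivAt t (hline t)
  have hfcd : ∀ i : Fin n, ContDiff ℝ 1 (fderiv ℝ (fun w' => pairNet σ (x i) w' vstar)) := fun i =>
    (pairNet_contDiff σ hσ_an (x i) vstar).fderiv_right (by norm_num)
  have hgd2 : ∀ (i : Fin n) (t : ℝ),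
      HasDerivAt (fun s : ℝ => fderiv ℝ (fun w' => pairNet σ (x i) w' vstar) (w0 + s • u) u)
      ((fderiv ℝ (fderiv ℝ (fun w' => pairNet σ (x i) w' vstar)) (w0 + t • u) u) u) t := by
    intro i t
    have h1 := (((hfcd i).differentiable one_ne_zero) (w0 + t • u)).hasFDerivAt.comp_hasDerivAt t (hline t)
    simpa using h1.clm_apply (hasDerivAt_const t u)
  have hbound2 : ∀ i : Fin n, ∀ t ∈ Set.Ioo (0:ℝ) 1,
      |(fderiv ℝ (fderiv ℝ (fun w' => pairNet σ (x i) w' vstar)) (w0 + t • u) u) u| ≤ lam * ε ^ 2 := by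
    intro i t ht
    have h2 := hlam i t ⟨le_of_lt ht.1, by linarith [ht.2]⟩ u
    rw [hcase] at h2
    rw [iteratedFDeriv_two_apply] at h2
    simpa using h2
  have hpt1 : w0 + (1:ℝ) • u = wstar := by rw [one_smul, hu]; abel
  have hzero : ∀ i : Fin n, pairNet σ (x i) (w0 + (0:ℝ) • u) vstar = 0 := fun i => by
    simp [pairNet, hmirror, zero_smul]
  have hδ : ∀ i : Fin n,
      |fderiv ℝ (fun w' => pairNet σ (x i) w' vstar) wstar u - pairNet σ (x i) wstar vstar|
        ≤ lam * ε ^ 2 / 2 := by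
    intro i
    have h := rolle2 (fun s : ℝ => pairNet σ (x i) (w0 + s • u) vstar)
      (fun t => fderiv ℝ (fun w' => pairNet σ (x i) w' vstar) (w0 + t • u) u)
      (fun t => (fderiv ℝ (fderiv ℝ (fun w' => pairNet σ (x i) w' vstar)) (w0 + t • u) u) u)
      (hgd i) (hgd2 i) (lam * ε ^ 2) (hbound2 i)
    simp only [hzero i, hpt1] at h
    have heq : fderiv ℝ (fun w' => pairNet σ (x i) w' vstar) wstar u - pairNet σ (x i) wstar vstar
        = 0 - pairNet σ (x i) wstar vstar
          + fderiv ℝ (fun w' => pairNet σ (x i) w' vstar) wstar u := by ring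
    rw [heq]
    exact h
  -- step 2 : c ε² = Σ r_i ⟨∇f_i(w*), u⟩
  have hc2 : c * ε ^ 2 = ∑ i, (y i - pairNet σ (x i) wstar vstar) *
      (fderiv ℝ (fun w' => pairNet σ (x i) w' vstar) wstar u) := by
    have h1 : ∀ (j : Fin h ⊕ Fin h) (k : Fin d), c * u j k
        = ∑ i, (y i - pairNet σ (x i) wstar vstar) *
          (fderiv ℝ (fun w' => pairNet σ (x i) w' vstar) wstar (Pi.single j (Pi.single k 1))) := by
      intro j k
      have h2 := loss_fderiv σ hσ_an x y vstar wstar (Pi.single j (Pi.single k 1))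
      have h3 := hge j k
      have h4 : gradLossW σ x y wstar vstar j k
          = fderiv ℝ (fun w' => pairLoss σ x y w' vstar) wstar (Pi.single j (Pi.single k 1)) := rfl
      rw [h4, h2] at h3
      have h5 : u j k = wstar j k - w0 j k := by rw [hu]; simp
      rw [h5]
      linarith
    calc c * ε ^ 2 = ∑ j, ∑ k, u j k * (c * u j k) := by
          rw [← hS, Finset.mul_sum]
          refine Finset.sum_congr rfl fun j _ => ?_
          rw [Finset.mul_sum]
          exact Finset.sum_congr rfl fun k _ => by ring
      _ = ∑ j, ∑ k, ∑ i, (y i - pairNet σ (x i) wstar vstar) *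
            (fderiv ℝ (fun w' => pairNet σ (x i) w' vstar) wstar (Pi.single j (Pi.single k 1)))
            * u j k := by
          refine Finset.sum_congr rfl fun j _ => Finset.sum_congr rfl fun k _ => ?_
          rw [h1 j k, Finset.mul_sum]
          exact Finset.sum_congr rfl fun i _ => by ring
      _ = ∑ i, ∑ j, ∑ k, (y i - pairNet σ (x i) wstar vstar) *
            (fderiv ℝ (fun w' => pairNet σ (x i) w' vstar) wstar (Pi.single j (Pi.single k 1)))
            * u j k := by
          rw [show (∑ j, ∑ k, ∑ i, (y i - pairNet σ (x i) wstar vstar) *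
            (fderiv ℝ (fun w' => pairNet σ (x i) w' vstar) wstar (Pi.single j (Pi.single k 1)))
            * u j k) = ∑ j, ∑ i, ∑ k, (y i - pairNet σ (x i) wstar vstar) *
            (fderiv ℝ (fun w' => pairNet σ (x i) w' vstar) wstar (Pi.single j (Pi.single k 1)))
            * u j k from Finset.sum_congr rfl fun j _ => Finset.sum_comm]
          exact Finset.sum_comm
      _ = ∑ i, (y i - pairNet σ (x i) wstar vstar) *
            (fderiv ℝ (fun w' => pairNet σ (x i) w' vstar) wstar u) := by
          refine Finset.sum_congr rfl fun i _ => ?_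
          rw [clm_decomp (fderiv ℝ (fun w' => pairNet σ (x i) w' vstar) wstar) u, Finset.mul_sum]
          refine Finset.sum_congr rfl fun j _ => ?_
          rw [Finset.mul_sum]
          exact Finset.sum_congr rfl fun k _ => by ring
  -- step 3 : ⟨r, f⟩ ≤ 0
  have hP : ∑ i, (y i - pairNet σ (x i) wstar vstar) * pairNet σ (x i) wstar vstar ≤ 0 := by
    set P := ∑ i, (y i - pairNet σ (x i) wstar vstar) * pairNet σ (x i) wstar vstar with hPd
    set Q := ∑ i, (pairNet σ (x i) wstar vstar) ^ 2 with hQd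
    have hQ0 : 0 ≤ Q := by rw [hQd]; positivity
    have claim : ∀ s : ℝ, 0 < s → 2 * s * P ≤ s ^ 2 * Q := by
      intro s hs
      have hfeas' : inB ζ κ (fun j => (1 + s) * vstar j) := by
        constructor
        · intro j
          show ζ ≤ (1 + s) * vstar j
          have h1 := hfeas_v.1 j
          nlinarith [mul_pos hs (lt_of_lt_of_le hζ h1)]
        · intro j j'
          show (1 + s) * vstar j / ((1 + s) * vstar j') ≤ κ
          have h1s : (1 + s) ≠ 0 := by positivity
          rw [mul_div_mul_left _ _ h1s]
          exact hfeas_v.2 j j'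
      have hmin := hmin_v _ hfeas'
      have hlin : ∀ i : Fin n, pairNet σ (x i) wstar (fun j => (1 + s) * vstar j)
          = (1 + s) * pairNet σ (x i) wstar vstar := by
        intro i
        unfold pairNet
        rw [Finset.mul_sum]
        exact Finset.sum_congr rfl fun j _ => by ring
      have hexp : ∑ i, (y i - pairNet σ (x i) wstar (fun j => (1 + s) * vstar j)) ^ 2
          = (∑ i, (y i - pairNet σ (x i) wstar vstar) ^ 2) - 2 * s * P + s ^ 2 * Q := by
        rw [hPd, hQd, Finset.mul_sum, Finset.mul_sum, ← Finset.sum_sub_distrib,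
          ← Finset.sum_add_distrib]
        refine Finset.sum_congr rfl fun i _ => ?_
        rw [hlin i]
        ring
      have hmin' : (1/2 : ℝ) * ∑ i, (y i - pairNet σ (x i) wstar vstar) ^ 2
          ≤ (1/2 : ℝ) * ∑ i, (y i - pairNet σ (x i) wstar (fun j => (1 + s) * vstar j)) ^ 2 := hmin
      rw [hexp] at hmin'
      linarith
    by_contra hPneg
    push_neg at hPneg
    rcases eq_or_lt_of_le hQ0 with hQ | hQ
    · have hall := (Finset.sum_eq_zero_iff_of_nonneg
        (fun i (_ : i ∈ Finset.univ) => sq_nonneg (pairNet σ (x i) wstar vstar))).mp hQ.symm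
      have hP0 : P = 0 := by
        rw [hPd]
        refine Finset.sum_eq_zero fun i hi => ?_
        have := (pow_eq_zero_iff two_ne_zero).mp (hall i hi)
        rw [this]; ring
      linarith
    · have hclaim := claim (P / Q) (div_pos hPneg hQ)
      have h1 : 2 * (P / Q) * P = 2 * (P ^ 2 / Q) := by ring
      have h2 : (P / Q) ^ 2 * Q = P ^ 2 / Q := by field_simp
      rw [h1, h2] at hclaim
      have hpos : 0 < P ^ 2 / Q := div_pos (pow_pos hPneg 2) hQ
      linarith
  -- step 5 : bound on pairNet with v = ζ𝟙
  have hq : ∀ i : Fin n, |pairNet σ (x i) wstar (fun _ : Fin h => ζ)| ≤ (h:ℝ) * (L:ℝ) * ζ * ε := by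
    intro i
    have hEa : ∀ a : Fin h ⊕ Fin h, |∑ k, u a k * x i k| ≤ eNorm (u a) := by
      intro a
      calc |∑ k, u a k * x i k| ≤ eNorm (u a) * eNorm (x i) := cs_abs _ _
        _ ≤ eNorm (u a) * 1 := mul_le_mul_of_nonneg_left (hx i) (eNorm_nonneg_s12 _)
        _ = eNorm (u a) := mul_one _
    have hterm : ∀ j : Fin h,
        |σ (∑ k, wstar (Sum.inl j) k * x i k) - σ (∑ k, wstar (Sum.inr j) k * x i k)|
          ≤ (L:ℝ) * (eNorm (u (Sum.inl j)) + eNorm (u (Sum.inr j))) := by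
      intro j
      have hlip := hσ_lip.dist_le_mul (∑ k, wstar (Sum.inl j) k * x i k)
        (∑ k, wstar (Sum.inr j) k * x i k)
      rw [Real.dist_eq, Real.dist_eq] at hlip
      have hdiff : (∑ k, wstar (Sum.inl j) k * x i k) - (∑ k, wstar (Sum.inr j) k * x i k)
          = (∑ k, u (Sum.inl j) k * x i k) - (∑ k, u (Sum.inr j) k * x i k) := by
        rw [← Finset.sum_sub_distrib, ← Finset.sum_sub_distrib]
        refine Finset.sum_congr rfl fun k _ => ?_
        rw [hu]
        simp only [Pi.sub_apply]
        rw [hmirror j]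
        ring
      calc |σ (∑ k, wstar (Sum.inl j) k * x i k) - σ (∑ k, wstar (Sum.inr j) k * x i k)|
          ≤ (L:ℝ) * |(∑ k, wstar (Sum.inl j) k * x i k) - (∑ k, wstar (Sum.inr j) k * x i k)| := hlip
        _ = (L:ℝ) * |(∑ k, u (Sum.inl j) k * x i k) - (∑ k, u (Sum.inr j) k * x i k)| := by
            rw [hdiff]
        _ ≤ (L:ℝ) * (|∑ k, u (Sum.inl j) k * x i k| + |∑ k, u (Sum.inr j) k * x i k|) :=
            mul_le_mul_of_nonneg_left (abs_sub _ _) hL0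
        _ ≤ (L:ℝ) * (eNorm (u (Sum.inl j)) + eNorm (u (Sum.inr j))) :=
            mul_le_mul_of_nonneg_left (add_le_add (hEa _) (hEa _)) hL0
    have hsum1 : |pairNet σ (x i) wstar (fun _ : Fin h => ζ)|
        ≤ ∑ j : Fin h, ζ * ((L:ℝ) * (eNorm (u (Sum.inl j)) + eNorm (u (Sum.inr j)))) := by
      refine (Finset.abs_sum_le_sum_abs _ _).trans ?_
      apply Finset.sum_le_sum
      intro j _
      rw [abs_mul, abs_of_nonneg (le_of_lt hζ)]
      exact mul_le_mul_of_nonneg_left (hterm j) (le_of_lt hζ)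
    have hsum2 : ∑ j : Fin h, ζ * ((L:ℝ) * (eNorm (u (Sum.inl j)) + eNorm (u (Sum.inr j))))
        = ζ * (L:ℝ) * ∑ a : Fin h ⊕ Fin h, eNorm (u a) := by
      rw [Fintype.sum_sum_type, mul_add, Finset.mul_sum, Finset.mul_sum, ← Finset.sum_add_distrib]
      exact Finset.sum_congr rfl fun j _ => by ring
    have hsumE : ∑ a : Fin h ⊕ Fin h, eNorm (u a) ≤ Real.sqrt (2 * (h:ℝ)) * ε := by
      calc ∑ a : Fin h ⊕ Fin h, eNorm (u a)
          = ∑ a : Fin h ⊕ Fin h, (fun _ : Fin h ⊕ Fin h => (1:ℝ)) a * eNorm (u a) := by simp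
        _ ≤ eNorm (fun _ : Fin h ⊕ Fin h => (1:ℝ)) * eNorm (fun a => eNorm (u a)) := cs_le _ _
        _ = Real.sqrt (2 * (h:ℝ)) * ε := by
            congr 1
            · show Real.sqrt (∑ _a : Fin h ⊕ Fin h, ((1:ℝ)) ^ 2) = Real.sqrt (2 * (h:ℝ))
              rw [show ∑ _a : Fin h ⊕ Fin h, ((1:ℝ)) ^ 2 = 2 * (h:ℝ) by
                simp [Finset.card_univ]; push_cast; ring]
            · have e1 : ∑ a : Fin h ⊕ Fin h, (eNorm (u a)) ^ 2 = ε ^ 2 := by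
                rw [← hS]
                exact Finset.sum_congr rfl fun a _ => Real.sq_sqrt (by positivity)
              show Real.sqrt (∑ a : Fin h ⊕ Fin h, (eNorm (u a)) ^ 2) = ε
              rw [e1, Real.sqrt_sq hε0]
    have hsqh : Real.sqrt (2 * (h:ℝ)) ≤ (h:ℝ) := by
      have h2 : (2:ℝ) ≤ (h:ℝ) := by exact_mod_cast hh
      have h3 := Real.sqrt_le_sqrt (show 2 * (h:ℝ) ≤ (h:ℝ) ^ 2 by nlinarith)
      rwa [Real.sqrt_sq (by positivity)] at h3
    calc |pairNet σ (x i) wstar (fun _ : Fin h => ζ)|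
        ≤ ∑ j : Fin h, ζ * ((L:ℝ) * (eNorm (u (Sum.inl j)) + eNorm (u (Sum.inr j)))) := hsum1
      _ = ζ * (L:ℝ) * ∑ a : Fin h ⊕ Fin h, eNorm (u a) := hsum2
      _ ≤ ζ * (L:ℝ) * (Real.sqrt (2 * (h:ℝ)) * ε) :=
          mul_le_mul_of_nonneg_left hsumE (by positivity)
      _ ≤ ζ * (L:ℝ) * ((h:ℝ) * ε) :=
          mul_le_mul_of_nonneg_left (mul_le_mul_of_nonneg_right hsqh hε0) (by positivity)
      _ = (h:ℝ) * (L:ℝ) * ζ * ε := by ring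
  -- step 5b : Σ r² ≤ 2X
  have hr2 : ∑ i, (y i - pairNet σ (x i) wstar vstar) ^ 2
      ≤ 2 * ((n:ℝ) * ((h:ℝ) * (L:ℝ) * ζ * ε) ^ 2 + (n:ℝ) * C_y ^ 2) := by
    have hκ1 : (1:ℝ) ≤ κ := by
      have j0 : Fin h := ⟨0, by omega⟩
      have hv0 : vstar j0 ≠ 0 := ne_of_gt (lt_of_lt_of_le hζ (hfeas_v.1 j0))
      have h1 := hfeas_v.2 j0 j0
      rwa [div_self hv0] at h1
    have hfeasζ : inB ζ κ (fun _ : Fin h => ζ) := by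
      refine ⟨fun j => le_refl ζ, fun j j' => ?_⟩
      rw [div_self (ne_of_gt hζ)]
      exact hκ1
    have hmin := hmin_v _ hfeasζ
    have hmin' : (1/2 : ℝ) * ∑ i, (y i - pairNet σ (x i) wstar vstar) ^ 2
        ≤ (1/2 : ℝ) * ∑ i, (y i - pairNet σ (x i) wstar (fun _ : Fin h => ζ)) ^ 2 := hmin
    have hub : ∑ i, (y i - pairNet σ (x i) wstar (fun _ : Fin h => ζ)) ^ 2
        ≤ ∑ _i : Fin n, (2 * C_y ^ 2 + 2 * ((h:ℝ) * (L:ℝ) * ζ * ε) ^ 2) := by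
      apply Finset.sum_le_sum
      intro i _
      have h1 := abs_le.mp (hy i)
      have h2 := abs_le.mp (hq i)
      have h3 : (y i) ^ 2 ≤ C_y ^ 2 := sq_le_sq' h1.1 h1.2
      have h4 : (pairNet σ (x i) wstar (fun _ : Fin h => ζ)) ^ 2
          ≤ ((h:ℝ) * (L:ℝ) * ζ * ε) ^ 2 := sq_le_sq' h2.1 h2.2
      nlinarith [sq_nonneg (y i + pairNet σ (x i) wstar (fun _ : Fin h => ζ))]
    rw [Finset.sum_const, Finset.card_univ, Fintype.card_fin, nsmul_eq_mul] at hub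
    nlinarith [hmin', hub]
  -- assemble
  have hchain : c * ε ^ 2 ≤ eNorm (fun i => y i - pairNet σ (x i) wstar vstar)
      * (Real.sqrt (n:ℝ) * (lam * ε ^ 2 / 2)) := by
    rw [hc2]
    have hsplit : ∑ i, (y i - pairNet σ (x i) wstar vstar) *
        (fderiv ℝ (fun w' => pairNet σ (x i) w' vstar) wstar u)
        = (∑ i, (y i - pairNet σ (x i) wstar vstar) * pairNet σ (x i) wstar vstar)
          + ∑ i, (y i - pairNet σ (x i) wstar vstar) *
            (fderiv ℝ (fun w' => pairNet σ (x i) w' vstar) wstar u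
              - pairNet σ (x i) wstar vstar) := by
      rw [← Finset.sum_add_distrib]
      exact Finset.sum_congr rfl fun i _ => by ring
    rw [hsplit]
    have hcs := cs_le (fun i => y i - pairNet σ (x i) wstar vstar)
      (fun i => fderiv ℝ (fun w' => pairNet σ (x i) w' vstar) wstar u
        - pairNet σ (x i) wstar vstar)
    have hδnorm : eNorm (fun i => fderiv ℝ (fun w' => pairNet σ (x i) w' vstar) wstar u
        - pairNet σ (x i) wstar vstar) ≤ Real.sqrt (n:ℝ) * (lam * ε ^ 2 / 2) := by
      unfold eNorm
      have h1 : ∑ i, (fderiv ℝ (fun w' => pairNet σ (x i) w' vstar) wstar u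
          - pairNet σ (x i) wstar vstar) ^ 2 ≤ ∑ _i : Fin n, (lam * ε ^ 2 / 2) ^ 2 := by
        apply Finset.sum_le_sum
        intro i _
        rw [← sq_abs]
        exact pow_le_pow_left₀ (abs_nonneg _) (hδ i) 2
      rw [Finset.sum_const, Finset.card_univ, Fintype.card_fin, nsmul_eq_mul] at h1
      calc Real.sqrt (∑ i, (fderiv ℝ (fun w' => pairNet σ (x i) w' vstar) wstar u
            - pairNet σ (x i) wstar vstar) ^ 2)
          ≤ Real.sqrt ((n:ℝ) * (lam * ε ^ 2 / 2) ^ 2) := Real.sqrt_le_sqrt h1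
        _ = Real.sqrt (n:ℝ) * (lam * ε ^ 2 / 2) := by
            rw [Real.sqrt_mul (Nat.cast_nonneg n), Real.sqrt_sq (by positivity)]
    have h2 : ∑ i, (y i - pairNet σ (x i) wstar vstar) *
        (fderiv ℝ (fun w' => pairNet σ (x i) w' vstar) wstar u - pairNet σ (x i) wstar vstar)
        ≤ eNorm (fun i => y i - pairNet σ (x i) wstar vstar)
          * (Real.sqrt (n:ℝ) * (lam * ε ^ 2 / 2)) :=
      hcs.trans (mul_le_mul_of_nonneg_left hδnorm (eNorm_nonneg_s12 _))
    linarith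
  rw [hLHS, hcase]
  rw [← mul_le_mul_iff_of_pos_right hε]
  rcases Nat.eq_zero_or_pos n with hn | hn
  · subst hn
    simp only [Nat.cast_zero, mul_zero, Real.sqrt_zero, zero_mul]
    have h0 : eNorm (fun i : Fin 0 => y i - pairNet σ (x i) wstar vstar) = 0 := by
      simp [eNorm]
    rw [h0] at hchain
    nlinarith [hchain]
  · have hCy : 0 ≤ C_y := le_trans (abs_nonneg _) (hy ⟨0, hn⟩)
    set X : ℝ := (n:ℝ) * ((h:ℝ) * (L:ℝ) * ζ * ε) ^ 2 + (n:ℝ) * C_y ^ 2 with hXd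
    have hXnn : 0 ≤ X := by rw [hXd]; positivity
    have hRbound : eNorm (fun i => y i - pairNet σ (x i) wstar vstar)
        ≤ Real.sqrt 2 * Real.sqrt X := by
      unfold eNorm
      rw [← Real.sqrt_mul (by norm_num : (0:ℝ) ≤ 2)]
      exact Real.sqrt_le_sqrt hr2
    have hsq23 : Real.sqrt 2 ≤ 3 := by
      have h1 : Real.sqrt 2 ≤ Real.sqrt 9 := Real.sqrt_le_sqrt (by norm_num)
      rwa [show (9:ℝ) = 3 ^ 2 by norm_num, Real.sqrt_sq (by norm_num : (0:ℝ) ≤ 3)] at h1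
    have hRb2 : eNorm (fun i => y i - pairNet σ (x i) wstar vstar)
        ≤ Real.sqrt (n:ℝ) * C_y + 3 * Real.sqrt X := by
      calc eNorm (fun i => y i - pairNet σ (x i) wstar vstar)
          ≤ Real.sqrt 2 * Real.sqrt X := hRbound
        _ ≤ 3 * Real.sqrt X := mul_le_mul_of_nonneg_right hsq23 (Real.sqrt_nonneg _)
        _ ≤ Real.sqrt (n:ℝ) * C_y + 3 * Real.sqrt X :=
            le_add_of_nonneg_left (mul_nonneg (Real.sqrt_nonneg _) hCy)
    have hsn : Real.sqrt (n:ℝ) ≤ Real.sqrt (20 * (n:ℝ)) :=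
      Real.sqrt_le_sqrt (by nlinarith [Nat.cast_nonneg (α := ℝ) n])
    have hWnn : 0 ≤ Real.sqrt (n:ℝ) * C_y + 3 * Real.sqrt X := by
      have := mul_nonneg (Real.sqrt_nonneg (n:ℝ)) hCy
      positivity
    have hmm : eNorm (fun i => y i - pairNet σ (x i) wstar vstar) * Real.sqrt (n:ℝ)
        ≤ (Real.sqrt (n:ℝ) * C_y + 3 * Real.sqrt X) * Real.sqrt (20 * (n:ℝ)) :=
      mul_le_mul hRb2 hsn (Real.sqrt_nonneg _) hWnn
    calc c * ε * ε = c * ε ^ 2 := by ring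
      _ ≤ eNorm (fun i => y i - pairNet σ (x i) wstar vstar)
          * (Real.sqrt (n:ℝ) * (lam * ε ^ 2 / 2)) := hchain
      _ = (eNorm (fun i => y i - pairNet σ (x i) wstar vstar) * Real.sqrt (n:ℝ))
          * (lam * ε ^ 2 / 2) := by ring
      _ ≤ ((Real.sqrt (n:ℝ) * C_y + 3 * Real.sqrt X) * Real.sqrt (20 * (n:ℝ)))
          * (lam * ε ^ 2 / 2) := mul_le_mul_of_nonneg_right hmm (by positivity)
      _ = (ε / 2) * lam * Real.sqrt (20 * (n:ℝ))
          * (Real.sqrt (n:ℝ) * C_y + 3 * Real.sqrt X) * ε := by ring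
end
end
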